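/- Let g be a real-valued random variable with mean ḡ = E[g] ≠ 0 and second central moment E[(g − ḡ)²] ≤ σ̃², let ε ≥ 0 and γ > 0, and let ρ be a real number with ρ ≥ (ε/√γ)·|ḡ|. Then P[ Q_ρ(g) = −sgn(ḡ) ] ≤ σ̃ / ( (1 + ε/√γ)·|ḡ| ). In particular, if σ̃ = σ/√B for a batch size B > 0, the bound equals σ / ( √B·(1 + ε/√γ)·|ḡ| ). -/
import Mathlib


open MeasureTheory ProbabilityTheory

/-- The thresholded sign quantizer `Q_ρ`: the sign of `g` if `|g| ≥ ρ`, else `0`. -/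
noncomputable def thresholdedSign (ρ g : ℝ) : ℝ :=
  if ρ ≤ |g| then Real.sign g else 0

/-- Lemma 2 of the paper: if `g` has mean `gbar ≠ 0`, second central moment at
most `σ̃²`, and the threshold satisfies `ρ ≥ (ε/√γ)·|gbar|`, then the probability
that the thresholded sign of `g` is the opposite of `sgn(gbar)` is at most
`σ̃ / ((1 + ε/√γ)·|gbar|)`.  In particular, for `σ̃ = σ/√B` (mini-batch of size
`B`), the bound equals `σ / (√B·(1 + ε/√γ)·|gbar|)`. -/
theorem stmt_5
    {Ω : Type*} [MeasureSpace Ω] [IsProbabilityMeasure (ℙ : Measure Ω)]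
    (g : Ω → ℝ) (hgmeas : Measurable g) (hgint : Integrable g)
    (σt : ℝ) (hσt : 0 ≤ σt)
    (hgbar : (∫ ω, g ω) ≠ 0)
    (hsqint : Integrable (fun ω => (g ω - ∫ ω', g ω') ^ 2))
    (hvar : (∫ ω, (g ω - ∫ ω', g ω') ^ 2) ≤ σt ^ 2)
    (ε γ : ℝ) (hε : 0 ≤ ε) (hγ : 0 < γ)
    (ρ : ℝ) (hρ : ε / Real.sqrt γ * |∫ ω, g ω| ≤ ρ) :
    (ℙ {ω | thresholdedSign ρ (g ω) = -Real.sign (∫ ω', g ω')}).toReal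
        ≤ σt / ((1 + ε / Real.sqrt γ) * |∫ ω, g ω|) ∧
      ∀ σ B : ℝ, 0 < B → σt = σ / Real.sqrt B →
        (ℙ {ω | thresholdedSign ρ (g ω) = -Real.sign (∫ ω', g ω')}).toReal
          ≤ σ / (Real.sqrt B * (1 + ε / Real.sqrt γ) * |∫ ω, g ω|) := by
  set m := ∫ ω, g ω with hm
  set c := ε / Real.sqrt γ with hc
  have hc0 : 0 ≤ c := div_nonneg hε (Real.sqrt_nonneg _)
  have hma : 0 < |m| := abs_pos.mpr hgbar
  set a := (1 + c) * |m| with ha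
  have h1c : 0 < 1 + c := by linarith
  have ha0 : 0 < a := mul_pos h1c hma
  -- inclusion into the Chebyshev event
  have hsub : {ω | thresholdedSign ρ (g ω) = -Real.sign m} ⊆
      {ω | a ^ 2 ≤ (g ω - m) ^ 2} := by
    intro ω hω
    simp only [Set.mem_setOf_eq, thresholdedSign] at hω ⊢
    by_cases hρg : ρ ≤ |g ω|
    · rw [if_pos hρg] at hω
      have hρ' : c * |m| ≤ |g ω| := le_trans hρ hρg
      rcases lt_or_gt_of_ne hgbar with h | h
      · rw [Real.sign_of_neg h] at hω
        have hg0 : 0 < g ω := by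
          rcases lt_trichotomy (g ω) 0 with h' | h' | h'
          · rw [Real.sign_of_neg h'] at hω; norm_num at hω
          · rw [h', Real.sign_zero] at hω; norm_num at hω
          · exact h'
        have h1 : a ≤ g ω - m := by
          have : |g ω| = g ω := abs_of_pos hg0
          have h2 : |m| = -m := abs_of_neg h
          nlinarith
        nlinarith
      · rw [Real.sign_of_pos h] at hω
        have hg0 : g ω < 0 := by
          rcases lt_trichotomy (g ω) 0 with h' | h' | h'
          · exact h'
          · rw [h', Real.sign_zero] at hω; norm_num at hω
          · rw [Real.sign_of_pos h'] at hω; norm_num at hω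
        have h1 : a ≤ m - g ω := by
          have : |g ω| = -g ω := abs_of_neg hg0
          have h2 : |m| = m := abs_of_pos h
          nlinarith
        nlinarith
    · rw [if_neg hρg] at hω
      rcases Real.sign_apply_eq_of_ne_zero m hgbar with h | h <;> rw [h] at hω <;>
        norm_num at hω
  -- Chebyshev
  have hcheb := mul_meas_ge_le_integral_of_nonneg (μ := ℙ)
    (f := fun ω => (g ω - m) ^ 2) (ae_of_all _ fun ω => sq_nonneg _) hsqint (a ^ 2)
  have hmono : (ℙ {ω | thresholdedSign ρ (g ω) = -Real.sign m}).toReal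
      ≤ (ℙ {ω | a ^ 2 ≤ (g ω - m) ^ 2}).toReal :=
    ENNReal.toReal_mono (measure_ne_top _ _) (measure_mono hsub)
  set P := (ℙ {ω | thresholdedSign ρ (g ω) = -Real.sign m}).toReal with hP
  have hP0 : 0 ≤ P := ENNReal.toReal_nonneg
  have hP1 : P ≤ 1 := by
    rw [hP]
    exact ENNReal.toReal_le_of_le_ofReal one_pos.le (by simpa using prob_le_one)
  have hPcheb : a ^ 2 * P ≤ σt ^ 2 := by
    calc a ^ 2 * P ≤ a ^ 2 * (ℙ {ω | a ^ 2 ≤ (g ω - m) ^ 2}).toReal := by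
          exact mul_le_mul_of_nonneg_left hmono (sq_nonneg _)
      _ ≤ ∫ ω, (g ω - m) ^ 2 := hcheb
      _ ≤ σt ^ 2 := hvar
  have hmain : P ≤ σt / a := by
    rcases le_or_gt a σt with h | h
    · calc P ≤ 1 := hP1
        _ ≤ σt / a := (one_le_div ha0).mpr h
    · rw [le_div_iff₀ ha0]
      nlinarith
  refine ⟨hmain, ?_⟩
  intro σ B hB hσ
  have hsB : 0 < Real.sqrt B := Real.sqrt_pos.mpr hB
  have : σ / (Real.sqrt B * (1 + c) * |m|) = σt / a := by
    rw [hσ, ha, div_div]; ring_nf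
  rw [this]
  exact hmain
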